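/- Let c ≥ 1 and 0 ≤ a ≤ c−1 be integers, and define ε_{a,k} ∈ ℚ(q) for 1 ≤ k ≤ c+1 by ε_{a,1} := 1 and ε_{a,k+1} := q^(−c+1+2a)·ε_{a,k} + (−1)^k·qbinom(c,k). Then: (i) for every 1 ≤ k ≤ c, ε_{a,k} = (−1)^(k−1)·Σ_{j=0}^{a} q^(−(c+1)j+(k−1)(a+1))·qbinom(a,j)·qbinom(c−1−a, k−1−j); (ii) for every 1 ≤ k ≤ c+1, ε_{a,k} = σ(ε_{c−1−a,k}), where σ is the ℚ-algebra automorphism of ℚ(q) determined by σ(q) = q^(−1); (iii) ε_{a,c+1} = 0. -/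

import Mathlib

open scoped BigOperators

/-- The generator `q` of the field of rational functions `ℚ(q)`. -/
noncomputable def q : RatFunc ℚ := RatFunc.X

/-- The balanced quantum integer `[a] = (q^a - q^(-a))/(q - q⁻¹)`. -/
noncomputable def qint (a : ℤ) : RatFunc ℚ := (q ^ a - q ^ (-a)) / (q - q⁻¹)

/-- The quantum factorial `[k]! = [1][2]⋯[k]`. -/
noncomputable def qfact (k : ℕ) : RatFunc ℚ := ∏ i ∈ Finset.range k, qint ((i : ℤ) + 1)

/-- The balanced quantum binomial `qbinom a b = [a][a-1]⋯[a-b+1]/[b]!` for `b ≥ 0`,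
and `0` for `b < 0`. -/
noncomputable def qbinom (a b : ℤ) : RatFunc ℚ :=
  if b < 0 then 0
  else (∏ i ∈ Finset.range b.toNat, qint (a - (i : ℤ))) / qfact b.toNat

/-- The sequence `ε_{a,k}` (depending on `c`), defined by `ε_{a,1} = 1` and, for `k ≥ 1`,
`ε_{a,k+1} = q^(−c+1+2a)·ε_{a,k} + (−1)^k·qbinom(c,k)`. -/
noncomputable def eps (c a : ℕ) : ℕ → RatFunc ℚ
  | 0 => 1
  | 1 => 1
  | (k + 2) =>
      q ^ (-(c : ℤ) + 1 + 2 * (a : ℤ)) * eps c a (k + 1) +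
        (-1 : RatFunc ℚ) ^ (k + 1) * qbinom (c : ℤ) ((k : ℤ) + 1)

/-!
Put `n = c - 1 - a` and `S_k = ∑_{j ≤ a} q^(-(c+1)j + k(a+1)) qbinom(a, j) qbinom(n, k - j)`.
Expanding `qbinom(c, k+1) = qbinom((a+1) + n, k+1)` by the q-Vandermonde identity and splitting
each `qbinom(a+1, j)` by the q-Pascal rule gives `S_(k+1) + q^(-c+1+2a) S_k = qbinom(c, k+1)`,
which is the recurrence of `ε` up to the sign `(-1)^k`; hence `ε_{a,k+1} = (-1)^k S_k`, and
`S_c = 0` because `qbinom(n, c - j) = 0` for `j ≤ a`. The bar symmetry follows by induction on the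
recurrence: `σ` fixes every `[m]`, hence every q-binomial, and maps `q^(-c+1+2a)` to
`q^(-c+1+2(c-1-a))`.
-/

open Finset

lemma q_ne_zero : q ≠ 0 := RatFunc.X_ne_zero

lemma intDegree_q_pow (m : ℕ) : (q ^ m).intDegree = m := by
  rw [q, ← RatFunc.algebraMap_X, ← map_pow, RatFunc.intDegree_polynomial,
    Polynomial.natDegree_X_pow]

lemma intDegree_q_zpow (n : ℤ) : (q ^ n).intDegree = n := by
  obtain ⟨m, rfl | rfl⟩ := n.eq_nat_or_neg
  · rw [zpow_natCast, intDegree_q_pow]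
  · rw [zpow_neg, RatFunc.intDegree_inv, zpow_natCast, intDegree_q_pow]

lemma q_zpow_injective : Function.Injective (fun n : ℤ => q ^ n) := fun m n h => by
  simpa only [intDegree_q_zpow] using congrArg RatFunc.intDegree h

lemma q_sub_q_inv_ne_zero : q - q⁻¹ ≠ 0 := by
  simpa [sub_ne_zero] using q_zpow_injective.ne (by decide : (1 : ℤ) ≠ -1)

lemma qint_zero : qint 0 = 0 := by simp [qint]

lemma qint_ne_zero {n : ℤ} (hn : n ≠ 0) : qint n ≠ 0 :=
  div_ne_zero (sub_ne_zero.2 (q_zpow_injective.ne (by omega))) q_sub_q_inv_ne_zero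

lemma qint_eq_add (n m : ℤ) : qint n = q ^ (-m) * qint (n - m) + q ^ (n - m) * qint m := by
  simp only [qint, mul_div_assoc', ← add_div, mul_sub, ← zpow_add₀ q_ne_zero]
  ring_nf

lemma qbinom_zero_right (n : ℤ) : qbinom n 0 = 1 := by
  simp [qbinom, qfact]

lemma qbinom_of_neg (n : ℤ) {b : ℤ} (hb : b < 0) : qbinom n b = 0 := by
  simp [qbinom, hb]

lemma qbinom_of_lt {n b : ℤ} (hn : 0 ≤ n) (hnb : n < b) : qbinom n b = 0 := by
  rw [qbinom, if_neg (by omega), prod_eq_zero (i := n.toNat) (mem_range.2 (by omega)), zero_div]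
  rw [Int.toNat_of_nonneg hn, sub_self, qint_zero]

lemma qbinom_succ_right (n : ℤ) (m : ℕ) :
    qbinom n (m + 1) = qbinom n m * qint (n - m) / qint (m + 1) := by
  simp only [qbinom, if_neg (by omega : ¬ ((m : ℤ) + 1 < 0)), if_neg (by omega : ¬ ((m : ℤ) < 0)),
    show ((m : ℤ) + 1).toNat = m + 1 by omega, Int.toNat_natCast, qfact, prod_range_succ]
  field_simp

lemma qbinom_succ_eq_qint_div_mul (n : ℤ) (m : ℕ) :
    qbinom n (m + 1) = qint n / qint (m + 1) * qbinom (n - 1) m := by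
  simp only [qbinom, if_neg (by omega : ¬ ((m : ℤ) + 1 < 0)), if_neg (by omega : ¬ ((m : ℤ) < 0)),
    show ((m : ℤ) + 1).toNat = m + 1 by omega, Int.toNat_natCast, qfact]
  rw [prod_range_succ', prod_range_succ]
  simp only [Nat.cast_add, Nat.cast_one, sub_add_eq_sub_sub, sub_right_comm n, Nat.cast_zero,
    sub_zero]
  field_simp

lemma qbinom_pascal (n k : ℤ) :
    qbinom n k = q ^ (-k) * qbinom (n - 1) k + q ^ (n - k) * qbinom (n - 1) (k - 1) := by
  rcases lt_trichotomy k 0 with hk | rfl | hk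
  · simp [qbinom_of_neg _ hk, qbinom_of_neg _ (by omega : k - 1 < 0)]
  · simp [qbinom_zero_right, qbinom_of_neg]
  obtain ⟨m, rfl⟩ : ∃ m : ℕ, k = m + 1 := ⟨k.toNat - 1, by omega⟩
  rw [qbinom_succ_eq_qint_div_mul, qbinom_succ_right (n - 1), add_sub_cancel_right,
    qint_eq_add n (m + 1), show n - 1 - m = n - (m + 1) by ring]
  field_simp [qint_ne_zero (by omega : (m : ℤ) + 1 ≠ 0)]

lemma qbinom_zero_left (b : ℤ) : qbinom 0 b = if b = 0 then 1 else 0 := by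
  split_ifs with hb
  · rw [hb, qbinom_zero_right]
  · rcases lt_or_gt_of_ne hb with hb | hb
    · exact qbinom_of_neg 0 hb
    · exact qbinom_of_lt le_rfl hb

lemma qbinom_vandermonde (m n : ℕ) (k : ℤ) :
    qbinom ((m : ℤ) + n) k =
      ∑ j ∈ range (m + 1), q ^ (m * (k - j) - n * j) * qbinom m j * qbinom n (k - j) := by
  induction n generalizing k with
  | zero =>
    simp only [Nat.cast_zero, add_zero, zero_mul, sub_zero, qbinom_zero_left, sub_eq_zero,
      mul_ite, mul_one, mul_zero]
    rcases lt_or_ge k 0 with hk | hk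
    · rw [qbinom_of_neg _ hk, sum_eq_zero fun j _ => if_neg (by omega)]
    lift k to ℕ using hk
    rcases le_or_gt k m with hkm | hkm
    · rw [sum_eq_single_of_mem k (mem_range.2 (by omega)) fun j _ hj => if_neg (by omega),
        if_pos rfl, sub_self, mul_zero, zpow_zero, one_mul]
    · rw [qbinom_of_lt (Nat.cast_nonneg m) (by omega),
        sum_eq_zero fun j hj => if_neg (by rw [mem_range] at hj; omega)]
  | succ n ih =>
    rw [Nat.cast_succ, ← add_assoc, qbinom_pascal, add_sub_cancel_right, ih, ih, mul_sum, mul_sum,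
      ← sum_add_distrib]
    refine sum_congr rfl fun j _ => ?_
    rw [qbinom_pascal (n + 1), add_sub_cancel_right, sub_right_comm k 1]
    -- merge the powers of `q` in each summand, then compare exponents
    simp only [mul_add, ← mul_assoc, mul_right_comm _ (qbinom m j), ← zpow_add₀ q_ne_zero]
    ring_nf

lemma sum_qbinom_succ_mul (m : ℕ) (f : ℤ → RatFunc ℚ) :
    ∑ j ∈ range (m + 2), qbinom ((m : ℤ) + 1) j * f j =
      ∑ j ∈ range (m + 1), qbinom m j * (q ^ (-(j : ℤ)) * f j + q ^ ((m : ℤ) - j) * f (j + 1)) := by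
  simp only [qbinom_pascal ((m : ℤ) + 1), add_sub_cancel_right, add_mul, sum_add_distrib]
  rw [sum_range_succ (fun j : ℕ => q ^ (-(j : ℤ)) * qbinom m j * f j),
    sum_range_succ' (fun j : ℕ => q ^ ((m : ℤ) + 1 - j) * qbinom m ((j : ℤ) - 1) * f j),
    qbinom_of_lt (Nat.cast_nonneg m) (by push_cast; omega),
    Nat.cast_zero, zero_sub, qbinom_of_neg _ (by omega : (-1 : ℤ) < 0)]
  simp only [mul_zero, zero_mul, add_zero, mul_add, sum_add_distrib, Nat.cast_succ,
    add_sub_cancel_right, add_sub_add_right_eq_sub]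
  congr 1 <;> refine sum_congr rfl fun j _ => ?_ <;> ring

noncomputable def epsSum (c a : ℕ) (k : ℤ) : RatFunc ℚ :=
  ∑ j ∈ range (a + 1), q ^ (-((c : ℤ) + 1) * (j : ℤ) + k * ((a : ℤ) + 1)) *
    qbinom (a : ℤ) (j : ℤ) * qbinom ((c : ℤ) - 1 - (a : ℤ)) (k - (j : ℤ))

lemma epsSum_succ_add {c a : ℕ} (ha : a + 1 ≤ c) (k : ℤ) :
    epsSum c a (k + 1) + q ^ (-(c : ℤ) + 1 + 2 * (a : ℤ)) * epsSum c a k = qbinom c (k + 1) := by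
  obtain ⟨n, hc⟩ : ∃ n : ℕ, (c : ℤ) = a + 1 + n := ⟨c - 1 - a, by omega⟩
  set f : ℤ → RatFunc ℚ := fun j => q ^ ((a + 1) * (k + 1 - j) - n * j) * qbinom n (k + 1 - j)
  calc epsSum c a (k + 1) + q ^ (-(c : ℤ) + 1 + 2 * (a : ℤ)) * epsSum c a k
      = ∑ j ∈ range (a + 1),
          qbinom a j * (q ^ (-(j : ℤ)) * f j + q ^ ((a : ℤ) - j) * f (j + 1)) := by
        rw [epsSum, epsSum, mul_sum, ← sum_add_distrib]
        refine sum_congr rfl fun j _ => ?_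
        simp only [f, hc, add_sub_add_right_eq_sub, mul_add, ← mul_assoc,
          mul_right_comm _ (qbinom a j), ← zpow_add₀ q_ne_zero]
        ring_nf
    _ = ∑ j ∈ range (a + 2), qbinom ((a : ℤ) + 1) j * f j := (sum_qbinom_succ_mul a f).symm
    _ = qbinom c (k + 1) := by
        rw [hc, ← Nat.cast_succ, qbinom_vandermonde]
        refine sum_congr rfl fun j _ => ?_
        push_cast
        ring

lemma epsSum_zero (c a : ℕ) : epsSum c a 0 = 1 := by
  rw [epsSum, sum_eq_single_of_mem 0 (mem_range.2 (Nat.succ_pos a))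
    fun j _ hj => by rw [qbinom_of_neg ((c : ℤ) - 1 - a) (by omega), mul_zero]]
  simp [qbinom_zero_right]

lemma epsSum_eq_zero {c a : ℕ} (ha : a + 1 ≤ c) {k : ℤ} (hk : c ≤ k) : epsSum c a k = 0 :=
  sum_eq_zero fun j hj => by
    rw [mem_range] at hj
    rw [qbinom_of_lt (n := (c : ℤ) - 1 - a) (by omega) (by omega), mul_zero]

lemma eps_add_two (c a k : ℕ) :
    eps c a (k + 2) = q ^ (-(c : ℤ) + 1 + 2 * (a : ℤ)) * eps c a (k + 1) +
      (-1 : RatFunc ℚ) ^ (k + 1) * qbinom (c : ℤ) ((k : ℤ) + 1) := rfl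

lemma eps_succ_eq_epsSum {c a : ℕ} (ha : a + 1 ≤ c) (k : ℕ) :
    eps c a (k + 1) = (-1) ^ k * epsSum c a k := by
  induction k with
  | zero => rw [Nat.cast_zero, epsSum_zero, pow_zero, mul_one]; rfl
  | succ k ih =>
    rw [eps_add_two, ih, Nat.cast_succ, ← epsSum_succ_add ha]
    ring

section Bar

variable {F : Type*} [FunLike F (RatFunc ℚ) (RatFunc ℚ)] [RingHomClass F (RatFunc ℚ) (RatFunc ℚ)]
  (σ : F)

lemma qint_bar (hσ : σ q = q⁻¹) (n : ℤ) : σ (qint n) = qint n := by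
  unfold qint
  rw [map_div₀, map_sub, map_sub, map_zpow₀, map_zpow₀, map_inv₀, hσ, inv_inv, inv_zpow',
    inv_zpow', neg_neg, ← neg_sub, ← neg_sub q, neg_div_neg_eq]

lemma qbinom_bar (hσ : σ q = q⁻¹) (n b : ℤ) : σ (qbinom n b) = qbinom n b := by
  unfold qbinom qfact
  split_ifs
  · exact map_zero σ
  · simp only [map_div₀, map_prod, qint_bar σ hσ]

lemma eps_bar {c a : ℕ} (ha : a + 1 ≤ c) (hσ : σ q = q⁻¹) (k : ℕ) :
    σ (eps c a k) = eps c (c - 1 - a) k := by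
  induction k with
  | zero => exact map_one σ
  | succ k ih =>
    cases k with
    | zero => exact map_one σ
    | succ k =>
      rw [eps_add_two, eps_add_two, map_add, map_mul, map_mul, map_zpow₀, hσ, ih, map_pow, map_neg,
        map_one, qbinom_bar σ hσ, inv_zpow', Nat.cast_sub (by omega), Nat.cast_sub (by omega)]
      congr 3
      push_cast
      ring

end Bar

theorem eps_properties_general (c a : ℕ) (ha : a + 1 ≤ c) :
    (∀ k : ℕ, 1 ≤ k → k ≤ c →
      eps c a k = (-1 : RatFunc ℚ) ^ (k - 1) *
        ∑ j ∈ Finset.range (a + 1),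
          q ^ (-((c : ℤ) + 1) * (j : ℤ) + ((k : ℤ) - 1) * ((a : ℤ) + 1)) *
            qbinom (a : ℤ) (j : ℤ) * qbinom ((c : ℤ) - 1 - (a : ℤ)) ((k : ℤ) - 1 - (j : ℤ))) ∧
    (∀ k : ℕ, 1 ≤ k → k ≤ c + 1 →
      ∀ σ : RatFunc ℚ ≃ₐ[ℚ] RatFunc ℚ, σ q = q⁻¹ →
        eps c a k = σ (eps c (c - 1 - a) k)) ∧
    eps c a (c + 1) = 0 := by
  refine ⟨fun k hk _ => ?_, fun k _ _ σ hσ => ?_, ?_⟩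
  · obtain ⟨k, rfl⟩ := Nat.exists_eq_add_of_le' hk
    rw [eps_succ_eq_epsSum ha, epsSum, Nat.add_sub_cancel, Nat.cast_succ, add_sub_cancel_right]
  · rw [eps_bar σ (by omega) hσ, Nat.sub_sub_self (by omega)]
  · rw [eps_succ_eq_epsSum ha, epsSum_eq_zero ha le_rfl, mul_zero]

/-- Lemma 4.5 of the paper: the closed formula for `ε_{a,k}` for `1 ≤ k ≤ c`,
the bar-symmetry `ε_{a,k} = σ(ε_{c−1−a,k})` where `σ(q) = q⁻¹`, and the vanishing
`ε_{a,c+1} = 0`. -/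
theorem eps_properties (c a : ℕ) (hc : 1 ≤ c) (ha : a + 1 ≤ c) :
    (∀ k : ℕ, 1 ≤ k → k ≤ c →
      eps c a k = (-1 : RatFunc ℚ) ^ (k - 1) *
        ∑ j ∈ Finset.range (a + 1),
          q ^ (-((c : ℤ) + 1) * (j : ℤ) + ((k : ℤ) - 1) * ((a : ℤ) + 1)) *
            qbinom (a : ℤ) (j : ℤ) * qbinom ((c : ℤ) - 1 - (a : ℤ)) ((k : ℤ) - 1 - (j : ℤ))) ∧
    (∀ k : ℕ, 1 ≤ k → k ≤ c + 1 →
      ∀ σ : RatFunc ℚ ≃ₐ[ℚ] RatFunc ℚ, σ q = q⁻¹ →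
        eps c a k = σ (eps c (c - 1 - a) k)) ∧
    eps c a (c + 1) = 0 :=
  eps_properties_general c a ha
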